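/- Let f : 𝔛 → ℂ be radial. (a) If 1 ≤ p < 2, f ∈ L^{p,1}(𝔛) and z ∈ S_p (i.e. |Im z| ≤ δ_p), then the series ∑_{x∈𝔛} |f(x)·φ_z(x)| converges, so f̂(z) = ∑_{x∈𝔛} f(x)·φ_z(x) exists. (b) If f ∈ L^{2,1}(𝔛) and z ∈ ℝ \ (τ/2)ℤ, then the series ∑_{x∈𝔛} |f(x)·φ_z(x)| converges, so f̂(z) exists. -/

import Mathlib

open Complex MeasureTheory ENNReal Filter

noncomputable section

/-- A homogeneous tree of degree `q + 1`: a connected acyclic graph in which every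
vertex has exactly `q + 1` neighbours, together with a fixed reference vertex `o`. -/
structure HomTree (q : ℕ) where
  X : Type
  G : SimpleGraph X
  connected : G.Connected
  acyclic : G.IsAcyclic
  regular : ∀ x : X, (G.neighborSet x).ncard = q + 1
  o : X

namespace HomTree

/-- `τ = 2π / log q`. -/
def tau (q : ℕ) : ℝ := 2 * Real.pi / Real.log q

/-- The meromorphic `c`-function. -/
def cfun (q : ℕ) (z : ℂ) : ℂ :=
  ((q : ℂ) ^ ((1 : ℂ) / 2) / ((q : ℂ) + 1)) *
    (((q : ℂ) ^ ((1 : ℂ) / 2 + I * z) - (q : ℂ) ^ (-(1 : ℂ) / 2 - I * z)) /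
      ((q : ℂ) ^ (I * z) - (q : ℂ) ^ (-(I * z))))

/-- The coefficients `B′(n,m,s)`. -/
def Bp (q : ℕ) (s : ℝ) (n m : ℕ) : ℂ :=
  if n = 0 then
    (q : ℂ) ^ (-(I * (s : ℂ) * (m : ℂ))) +
      cfun q (s : ℂ) * ((q : ℂ) ^ (I * (s : ℂ) * (m : ℂ)) - (q : ℂ) ^ (-(I * (s : ℂ) * (m : ℂ))))
  else
    cfun q (s : ℂ) * (q : ℂ) ^ (I * (s : ℂ) * ((n : ℂ) - 1)) *
      ((q : ℂ) ^ (I * (s : ℂ) * ((m : ℂ) - (n : ℂ) + 1)) -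
        (q : ℂ) ^ (-(I * (s : ℂ) * ((m : ℂ) - (n : ℂ) + 1))))

variable {q : ℕ} (T : HomTree q)

/-- Counting measurable structure on the vertices. -/
instance : MeasurableSpace T.X := ⊤

/-- `|x| = d(o, x)`. -/
def nrm (x : T.X) : ℕ := T.G.dist T.o x

open Classical in
/-- The elementary spherical function `φ_z`. -/
def sph (z : ℂ) (x : T.X) : ℂ :=
  if ∃ k : ℤ, z = (k : ℂ) * (tau q : ℂ) then
    ((((q : ℂ) - 1) / ((q : ℂ) + 1)) * (T.nrm x : ℂ) + 1) * (q : ℂ) ^ (-(T.nrm x : ℂ) / 2)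
  else if ∃ k : ℤ, z = (tau q : ℂ) / 2 + (k : ℂ) * (tau q : ℂ) then
    (-1) ^ (T.nrm x) * ((((q : ℂ) - 1) / ((q : ℂ) + 1)) * (T.nrm x : ℂ) + 1) *
      (q : ℂ) ^ (-(T.nrm x : ℂ) / 2)
  else
    cfun q z * (q : ℂ) ^ ((I * z - 1 / 2) * (T.nrm x : ℂ)) +
      cfun q (-z) * (q : ℂ) ^ ((-(I * z) - 1 / 2) * (T.nrm x : ℂ))

/-- A function on the tree is radial if it depends only on `|x|`. -/
def Radial (f : T.X → ℂ) : Prop := ∀ x y : T.X, T.nrm x = T.nrm y → f x = f y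

/-- The weak `L^r` quasinorm `sup_{t>0} t · μ(|u| > t)^{1/r}` (w.r.t. the counting
measure when the underlying measurable space carries `Measure.count`). -/
def weakN {Y : Type} [MeasurableSpace Y] (r : ℝ) (u : Y → ℂ) : ℝ≥0∞ :=
  ⨆ t : ℝ, ENNReal.ofReal t * (Measure.count {y | t < ‖u y‖}) ^ (1 / r)

/-- The Lorentz `L^{r,1}` norm `(1/r)∫₀^∞ u*(t) t^{1/r-1} dt`, written in the equivalent
layer-cake form `∫₀^∞ μ(|u| > s)^{1/r} ds`. -/
def lorN1 {Y : Type} [MeasurableSpace Y] (r : ℝ) (u : Y → ℂ) : ℝ≥0∞ :=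
  ∫⁻ s in Set.Ioi (0 : ℝ), (Measure.count {y | s < ‖u y‖}) ^ (1 / r)

/-- The boundary `Ω`: infinite geodesic rays starting at `o`. -/
structure Boundary where
  seq : ℕ → T.X
  start : seq 0 = T.o
  adj : ∀ n, T.G.Adj (seq n) (seq (n + 1))
  dist_eq : ∀ n, T.G.dist T.o (seq n) = n

/-- The basic boundary set `E(x) = {ω : ω_{|x|} = x}`. -/
def E (x : T.X) : Set T.Boundary := {ω | ω.seq (T.nrm x) = x}

/-- The σ-algebra on `Ω` generated by the sets `E(x)`. -/
instance : MeasurableSpace T.Boundary :=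
  MeasurableSpace.generateFrom {S | ∃ x : T.X, S = T.E x}

/-- `|c(x,ω)|`: the distance from `o` of the last vertex on the geodesic from `o` to `x`
lying on the ray `ω`. -/
def confl (ω : T.Boundary) (x : T.X) : ℕ :=
  Nat.findGreatest (fun n => n + T.G.dist (ω.seq n) x = T.nrm x) (T.nrm x)

/-- The Poisson kernel `p(x,ω) = q^{h_ω(x)} = q^{2|c(x,ω)| - |x|}`. -/
def pker (ω : T.Boundary) (x : T.X) : ℝ :=
  (q : ℝ) ^ ((2 * (T.confl ω x) : ℤ) - (T.nrm x : ℤ))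

/-- The Poisson transform `P_z F(x) = ∫_Ω p(x,ω)^{1/2+iz} F(ω) dν(ω)`. -/
def ptrans (ν : Measure T.Boundary) (z : ℂ) (F : T.Boundary → ℂ) (x : T.X) : ℂ :=
  ∫ ω, ((T.pker ω x : ℂ) ^ ((1 : ℂ) / 2 + I * z)) * F ω ∂ν

/-- The Laplacian `ℒu(x) = (q+1)⁻¹ ∑_{y ∼ x} u(y)`. -/
def lap (u : T.X → ℂ) (x : T.X) : ℂ :=
  (1 / ((q : ℂ) + 1)) * ∑' y : T.G.neighborSet x, u y

/-- `γ(z) = (q^{1/2+iz} + q^{1/2-iz})/(q+1)`. -/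
def gam (q : ℕ) (z : ℂ) : ℂ :=
  ((q : ℂ) ^ ((1 : ℂ) / 2 + I * z) + (q : ℂ) ^ ((1 : ℂ) / 2 - I * z)) / ((q : ℂ) + 1)

/-- The conditional expectation `ℰ_n F(ω) = ν(E(ω_n))⁻¹ ∫_{E(ω_n)} F dν` (real valued). -/
def condE (ν : Measure T.Boundary) (F : T.Boundary → ℝ) (n : ℕ) (ω : T.Boundary) : ℝ :=
  (ν {ω' : T.Boundary | ω'.seq n = ω.seq n}).toReal⁻¹ *
    ∫ ω' in {ω' : T.Boundary | ω'.seq n = ω.seq n}, F ω' ∂ν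

/-- The conditional expectation (complex valued). -/
def condEC (ν : Measure T.Boundary) (F : T.Boundary → ℂ) (n : ℕ) (ω : T.Boundary) : ℂ :=
  (((ν {ω' : T.Boundary | ω'.seq n = ω.seq n}).toReal⁻¹ : ℝ) : ℂ) *
    ∫ ω' in {ω' : T.Boundary | ω'.seq n = ω.seq n}, F ω' ∂ν

/-- The martingale maximal function `ℰF(ω) = sup_n |ℰ_n F(ω)|`, valued in `[0,∞]`. -/
def maximal (ν : Measure T.Boundary) (F : T.Boundary → ℝ) (ω : T.Boundary) : ℝ≥0∞ :=
  ⨆ n : ℕ, ENNReal.ofReal |T.condE ν F n ω|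

/-- The martingale difference `Δ_n F = ℰ_n F - ℰ_{n-1} F`, with `ℰ_{-1} = 0`. -/
def deltaC (ν : Measure T.Boundary) (F : T.Boundary → ℂ) (n : ℕ) (ω : T.Boundary) : ℂ :=
  T.condEC ν F n ω - if n = 0 then 0 else T.condEC ν F (n - 1) ω

/-- `y` and `x` have the same `n`-th vertex on their geodesics from `o`. -/
def sameAt (n : ℕ) (x y : T.X) : Prop :=
  ∃ v : T.X, T.nrm v = n ∧ T.nrm v + T.G.dist v x = T.nrm x ∧ T.nrm v + T.G.dist v y = T.nrm y

/-- `S(n,x)`: `{x}` if `|x| ≤ n`, and `{y : |y| = |x|, y_n = x_n}` otherwise. -/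
def sphereSet (n : ℕ) (x : T.X) : Set T.X :=
  if T.nrm x ≤ n then {x} else {y | T.nrm y = T.nrm x ∧ T.sameAt n x y}

open Classical in
/-- `ε_n u(x) = (#S(n,x))⁻¹ ∑_{y ∈ S(n,x)} u(y)`. -/
def epsOp (n : ℕ) (u : T.X → ℂ) (x : T.X) : ℂ :=
  (((T.sphereSet n x).ncard : ℂ))⁻¹ * ∑' y : T.sphereSet n x, u y

/-- The ball `B(x,r)`. -/
def ball (x : T.X) (r : ℕ) : Set T.X := {y | T.G.dist x y ≤ r}

/-- `ℳu(x) = sup_{r ≥ 1} (#B(x,r))^{-1/2} ∑_{y ∈ B(x,r)} |u(y)|`, valued in `[0,∞]`. -/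
def maxOp (u : T.X → ℂ) (x : T.X) : ℝ≥0∞ :=
  ⨆ r : ℕ+, (Measure.count (T.ball x (r : ℕ))) ^ (-(1 : ℝ) / 2) *
    ∑' y : T.ball x (r : ℕ), ENNReal.ofReal (‖u y‖)

/-- The Helgason–Fourier transform `f̃(z,ω) = ∑_x f(x) p(x,ω)^{1/2+iz}`. -/
def hft (f : T.X → ℂ) (z : ℂ) (ω : T.Boundary) : ℂ :=
  ∑' x : T.X, f x * ((T.pker ω x : ℂ) ^ ((1 : ℂ) / 2 + I * z))

end HomTree
namespace HomTree

open SimpleGraph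

variable {q : ℕ} (T : HomTree q)

instance instMSC : MeasurableSingletonClass T.X :=
  ⟨fun _ => MeasurableSpace.measurableSet_top⟩

lemma path_unique {u v : T.X} (p p' : T.G.Walk u v) (hp : p.IsPath) (hp' : p'.IsPath) :
    p = p' := by
  have h := SimpleGraph.isAcyclic_iff_path_unique.mp T.acyclic
    (⟨p, hp⟩ : T.G.Path u v) ⟨p', hp'⟩
  exact congrArg Subtype.val h

lemma length_eq_dist {u v : T.X} (p : T.G.Walk u v) (hp : p.IsPath) :
    p.length = T.G.dist u v := by
  classical
  obtain ⟨w, hw⟩ := T.connected.exists_walk_length_eq_dist u v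
  refine le_antisymm ?_ (SimpleGraph.dist_le p)
  have h1 : p = w.bypass := T.path_unique p w.bypass hp w.bypass_isPath
  rw [h1, ← hw]
  exact w.length_bypass_le

lemma adj_level {x y : T.X} (h : T.G.Adj x y) :
    T.G.dist T.o y = T.G.dist T.o x + 1 ∨ T.G.dist T.o x = T.G.dist T.o y + 1 := by
  classical
  obtain ⟨w, hw⟩ := T.connected.exists_walk_length_eq_dist T.o x
  set P := w.bypass with hPdef
  have hPp : P.IsPath := w.bypass_isPath
  have hPl : P.length = T.G.dist T.o x := T.length_eq_dist P hPp
  by_cases hy : y ∈ P.support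
  · right
    have hsingle : (Walk.cons h.symm Walk.nil : T.G.Walk y x).IsPath := by
      simp [Walk.cons_isPath_iff, h.ne']
    have h2 : P.dropUntil y hy = Walk.cons h.symm Walk.nil :=
      T.path_unique _ _ (hPp.dropUntil hy) hsingle
    have h3 := congrArg Walk.length (P.take_spec hy)
    rw [Walk.length_append, h2] at h3
    simp only [Walk.length_cons, Walk.length_nil] at h3
    have h4 : (P.takeUntil y hy).length = T.G.dist T.o y :=
      T.length_eq_dist _ (hPp.takeUntil hy)
    omega
  · left
    have hP' : (P.concat h).IsPath := by
      have hrev : (P.concat h).reverse.IsPath := by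
        rw [Walk.reverse_concat, Walk.cons_isPath_iff]
        exact ⟨hPp.reverse, by simpa [Walk.support_reverse] using hy⟩
      simpa [Walk.concat_eq_append] using hrev.reverse
    have h5 := T.length_eq_dist _ hP'
    rw [Walk.length_concat, hPl] at h5
    exact h5.symm

lemma exists_parent {x : T.X} (hx : T.G.dist T.o x ≠ 0) :
    ∃ y, T.G.Adj y x ∧ T.G.dist T.o y + 1 = T.G.dist T.o x := by
  classical
  obtain ⟨w, hw⟩ := T.connected.exists_walk_length_eq_dist T.o x
  set P := w.bypass with hPdef
  have hPp : P.IsPath := w.bypass_isPath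
  have hPl : P.length = T.G.dist T.o x := T.length_eq_dist P hPp
  have hxo : x ≠ T.o := by
    rintro rfl
    simp [SimpleGraph.dist_self] at hx
  obtain ⟨w', a, Q', hQ⟩ := Walk.exists_eq_cons_of_ne hxo P.reverse
  have hrev : P.reverse.IsPath := hPp.reverse
  rw [hQ, Walk.cons_isPath_iff] at hrev
  refine ⟨w', a.symm, ?_⟩
  have hd : Q'.reverse.length = T.G.dist T.o w' :=
    T.length_eq_dist _ hrev.1.reverse
  have hlen : P.reverse.length = Q'.length + 1 := by rw [hQ, Walk.length_cons]
  rw [Walk.length_reverse] at hlen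
  rw [Walk.length_reverse] at hd
  omega








lemma concat_path {u v w : T.X} (p : T.G.Walk u v) (hp : p.IsPath) (h : T.G.Adj v w)
    (hw : w ∉ p.support) : (p.concat h).IsPath := by
  have hrev : (p.concat h).reverse.IsPath := by
    rw [Walk.reverse_concat, Walk.cons_isPath_iff]
    exact ⟨hp.reverse, by simpa [Walk.support_reverse] using hw⟩
  simpa [Walk.concat_eq_append] using hrev.reverse

lemma parent_unique {x y₁ y₂ : T.X} (h1 : T.G.Adj y₁ x) (h2 : T.G.Adj y₂ x)
    (hd1 : T.G.dist T.o y₁ + 1 = T.G.dist T.o x)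
    (hd2 : T.G.dist T.o y₂ + 1 = T.G.dist T.o x) : y₁ = y₂ := by
  classical
  obtain ⟨w1, hw1⟩ := T.connected.exists_walk_length_eq_dist T.o y₁
  obtain ⟨w2, hw2⟩ := T.connected.exists_walk_length_eq_dist T.o y₂
  set Q1 := w1.bypass with hQ1def
  set Q2 := w2.bypass with hQ2def
  have hQ1p : Q1.IsPath := w1.bypass_isPath
  have hQ2p : Q2.IsPath := w2.bypass_isPath
  have hQ1l : Q1.length = T.G.dist T.o y₁ := T.length_eq_dist Q1 hQ1p
  have hQ2l : Q2.length = T.G.dist T.o y₂ := T.length_eq_dist Q2 hQ2p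
  have hx1 : x ∉ Q1.support := by
    intro hmem
    have e1 : (Q1.takeUntil x hmem).length = T.G.dist T.o x :=
      T.length_eq_dist _ (hQ1p.takeUntil hmem)
    have e2 := Walk.length_takeUntil_le Q1 hmem
    omega
  have hx2 : x ∉ Q2.support := by
    intro hmem
    have e1 : (Q2.takeUntil x hmem).length = T.G.dist T.o x :=
      T.length_eq_dist _ (hQ2p.takeUntil hmem)
    have e2 := Walk.length_takeUntil_le Q2 hmem
    omega
  have hP12 : Q1.concat h1 = Q2.concat h2 :=
    T.path_unique _ _ (T.concat_path Q1 hQ1p h1 hx1) (T.concat_path Q2 hQ2p h2 hx2)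
  have := congrArg (fun W : T.G.Walk T.o x => W.reverse.getVert 1) hP12
  simpa [Walk.reverse_concat, Walk.getVert_cons_succ, Walk.getVert_zero] using this

/-- The sphere of radius `n` about `o`. -/
def level (n : ℕ) : Set T.X := {x | T.G.dist T.o x = n}

lemma neighborSet_finite (x : T.X) : (T.G.neighborSet x).Finite := by
  by_contra h
  have h0 : (T.G.neighborSet x).ncard = 0 := Set.Infinite.ncard h
  have := T.regular x
  omega

lemma level_zero : T.level 0 = {T.o} := by
  ext x
  simp only [level, Set.mem_setOf_eq, Set.mem_singleton_iff]
  rw [T.connected.dist_eq_zero_iff]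
  exact eq_comm

lemma level_finite (n : ℕ) : (T.level n).Finite := by
  induction n with
  | zero => rw [T.level_zero]; exact Set.finite_singleton _
  | succ n ih =>
    apply Set.Finite.subset (Set.Finite.biUnion ih fun x _ => T.neighborSet_finite x)
    intro y hy
    have hy' : T.G.dist T.o y = n + 1 := hy
    obtain ⟨p, hadj, hd⟩ := T.exists_parent (x := y) (by omega)
    exact Set.mem_biUnion (show p ∈ T.level n from by simp only [level, Set.mem_setOf_eq]; omega)
      (by exact hadj)



open Classical in
/-- Parent of a vertex. -/
noncomputable def par (x : T.X) : T.X :=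
  if h : T.G.dist T.o x ≠ 0 then (T.exists_parent h).choose else x

lemma par_spec {x : T.X} (h : T.G.dist T.o x ≠ 0) :
    T.G.Adj (T.par x) x ∧ T.G.dist T.o (T.par x) + 1 = T.G.dist T.o x := by
  rw [par, dif_pos h]
  exact (T.exists_parent h).choose_spec

lemma childcard {x : T.X} (hx : T.G.dist T.o x ≠ 0) :
    (T.G.neighborSet x ∩ T.level (T.G.dist T.o x + 1)).ncard = q := by
  have hps := T.par_spec hx
  have key : T.G.neighborSet x =
      insert (T.par x) (T.G.neighborSet x ∩ T.level (T.G.dist T.o x + 1)) := by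
    ext y
    simp only [SimpleGraph.mem_neighborSet, Set.mem_insert_iff, Set.mem_inter_iff, level,
      Set.mem_setOf_eq]
    constructor
    · intro hadj
      rcases T.adj_level hadj with h | h
      · exact Or.inr ⟨hadj, h⟩
      · exact Or.inl (T.parent_unique hadj.symm hps.1 (by omega) hps.2)
    · rintro (rfl | ⟨hadj, _⟩)
      exacts [hps.1.symm, hadj]
  have hnm : T.par x ∉ T.G.neighborSet x ∩ T.level (T.G.dist T.o x + 1) := by
    rintro ⟨-, hl⟩
    have : T.G.dist T.o (T.par x) = T.G.dist T.o x + 1 := hl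
    omega
  have hfin : (T.G.neighborSet x ∩ T.level (T.G.dist T.o x + 1)).Finite :=
    (T.neighborSet_finite x).inter_of_left _
  have hreg := T.regular x
  rw [key, Set.ncard_insert_of_notMem hnm hfin] at hreg
  omega

lemma level_ncard_zero : (T.level 0).ncard = 1 := by
  rw [T.level_zero]; exact Set.ncard_singleton _

lemma level_ncard_one : (T.level 1).ncard = q + 1 := by
  have : T.level 1 = T.G.neighborSet T.o := by
    ext y
    simp only [level, Set.mem_setOf_eq, SimpleGraph.mem_neighborSet]
    exact SimpleGraph.dist_eq_one_iff_adj
  rw [this]; exact T.regular T.o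

lemma level_ncard_succ {n : ℕ} (hn : n ≠ 0) :
    (T.level (n + 1)).ncard = q * (T.level n).ncard := by
  classical
  set S1 := (T.level_finite (n + 1)).toFinset with hS1
  set S0 := (T.level_finite n).toFinset with hS0
  have hmem1 : ∀ y, y ∈ S1 ↔ T.G.dist T.o y = n + 1 := by
    intro y; rw [hS1, Set.Finite.mem_toFinset]; exact Iff.rfl
  have hmem0 : ∀ y, y ∈ S0 ↔ T.G.dist T.o y = n := by
    intro y; rw [hS0, Set.Finite.mem_toFinset]; exact Iff.rfl
  have hmap : ∀ y ∈ S1, T.par y ∈ S0 := by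
    intro y hy
    rw [hmem1] at hy
    rw [hmem0]
    have := (T.par_spec (x := y) (by omega)).2
    omega
  have hcard := Finset.card_eq_sum_card_fiberwise hmap
  have hfib : ∀ x ∈ S0, (S1.filter fun y => T.par y = x).card = q := by
    intro x hx
    rw [hmem0] at hx
    have hfin : (T.G.neighborSet x ∩ T.level (T.G.dist T.o x + 1)).Finite :=
      (T.neighborSet_finite x).inter_of_left _
    have hset : (S1.filter fun y => T.par y = x) = hfin.toFinset := by
      ext y
      simp only [Finset.mem_filter, hmem1, Set.Finite.mem_toFinset, Set.mem_inter_iff,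
        SimpleGraph.mem_neighborSet, level, Set.mem_setOf_eq, hx]
      constructor
      · rintro ⟨hy1, rfl⟩
        exact ⟨(T.par_spec (x := y) (by omega)).1, hy1⟩
      · rintro ⟨hadj, hy1⟩
        have hp := T.par_spec (x := y) (by omega)
        exact ⟨hy1, T.parent_unique hp.1 hadj (by omega) (by omega)⟩
    rw [hset, ← Set.ncard_eq_toFinset_card _ hfin]
    exact T.childcard (by omega)
  rw [Finset.sum_congr rfl hfib, Finset.sum_const, smul_eq_mul] at hcard
  rw [Set.ncard_eq_toFinset_card _ (T.level_finite (n+1)),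
    Set.ncard_eq_toFinset_card _ (T.level_finite n), ← hS1, ← hS0, hcard, mul_comm]

lemma level_ncard_bounds (hq : 2 ≤ q) (n : ℕ) :
    q ^ n ≤ (T.level n).ncard ∧ (T.level n).ncard ≤ 2 * q ^ n := by
  induction n with
  | zero => simp [T.level_ncard_zero]
  | succ n ih =>
    rcases Nat.eq_zero_or_pos n with rfl | hn
    · rw [T.level_ncard_one]; constructor <;> simp <;> omega
    · rw [T.level_ncard_succ (by omega)]
      constructor
      · calc q ^ (n + 1) = q * q ^ n := by ring
          _ ≤ q * (T.level n).ncard := Nat.mul_le_mul_left q ih.1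
      · calc q * (T.level n).ncard ≤ q * (2 * q ^ n) := Nat.mul_le_mul_left q ih.2
          _ = 2 * q ^ (n + 1) := by ring

lemma level_nonempty (hq : 2 ≤ q) (n : ℕ) : (T.level n).Nonempty := by
  apply Set.nonempty_of_ncard_ne_zero
  have h1 := (T.level_ncard_bounds hq n).1
  have h2 : 1 ≤ q ^ n := Nat.one_le_pow _ _ (by omega)
  omega



lemma absorb {ρ : ℝ} (hρ : 1 < ρ) : ∃ C : ℝ, 0 ≤ C ∧ ∀ n : ℕ, (n + 1 : ℝ) ≤ C * ρ ^ n := by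
  have hρ0 : 0 < ρ := lt_trans one_pos hρ
  have hinv : ‖ρ⁻¹‖ < 1 := by
    rw [Real.norm_eq_abs, abs_of_pos (inv_pos.mpr hρ0)]
    exact inv_lt_one_of_one_lt₀ hρ
  have hs1 : Summable (fun n : ℕ => (n : ℝ) ^ 1 * (ρ⁻¹) ^ n) :=
    summable_pow_mul_geometric_of_norm_lt_one 1 hinv
  have hs2 : Summable (fun n : ℕ => (ρ⁻¹) ^ n) := summable_geometric_of_norm_lt_one hinv
  have hs : Summable (fun n : ℕ => ((n : ℝ) + 1) * (ρ⁻¹) ^ n) := by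
    have h := hs1.add hs2
    convert h using 2 with n
    ring
  refine ⟨∑' n : ℕ, ((n : ℝ) + 1) * (ρ⁻¹) ^ n, tsum_nonneg fun n => by positivity, fun n => ?_⟩
  have hle : ((n : ℝ) + 1) * (ρ⁻¹) ^ n ≤ ∑' m : ℕ, ((m : ℝ) + 1) * (ρ⁻¹) ^ m :=
    Summable.le_tsum hs n fun m _ => by positivity
  calc (n + 1 : ℝ) = ((n : ℝ) + 1) * (ρ⁻¹) ^ n * ρ ^ n := by
        rw [mul_assoc, ← mul_pow, inv_mul_cancel₀ (ne_of_gt hρ0), one_pow, mul_one]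
    _ ≤ (∑' m : ℕ, ((m : ℝ) + 1) * (ρ⁻¹) ^ m) * ρ ^ n :=
        mul_le_mul_of_nonneg_right hle (by positivity)

lemma abs_q_cpow (hq : 2 ≤ q) (w : ℂ) :
    ‖(q : ℂ) ^ w‖ = (q : ℝ) ^ w.re := by
  have h0 : (0 : ℝ) < (q : ℝ) := by
    have : 0 < q := by omega
    exact_mod_cast this
  have hcast : ((q : ℂ)) = (((q : ℝ) : ℂ)) := by norm_cast
  rw [hcast]
  exact Complex.norm_cpow_eq_rpow_re_of_pos h0 w

lemma sph_bound_deg (hq : 2 ≤ q) (z : ℂ)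
    (hz : (∃ k : ℤ, z = (k : ℂ) * (tau q : ℂ)) ∨
      (∃ k : ℤ, z = (tau q : ℂ) / 2 + (k : ℂ) * (tau q : ℂ))) (x : T.X) :
    ‖T.sph z x‖ ≤ ((T.nrm x : ℝ) + 1) * (q : ℝ) ^ (-(T.nrm x : ℝ) / 2) := by
  have h0 : (0 : ℝ) < (q : ℝ) := by
    have : 0 < q := by omega
    exact_mod_cast this
  set n := T.nrm x with hn
  have habs : ‖(((q : ℂ) - 1) / ((q : ℂ) + 1)) * (n : ℂ) + 1‖ ≤ (n : ℝ) + 1 := by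
    have hcast : (((q : ℂ) - 1) / ((q : ℂ) + 1)) * (n : ℂ) + 1 =
        (((((q : ℝ) - 1) / ((q : ℝ) + 1)) * (n : ℝ) + 1 : ℝ) : ℂ) := by
      push_cast; ring
    have h1 : (1 : ℝ) ≤ (q : ℝ) := by
      have : 1 ≤ q := by omega
      exact_mod_cast this
    have hnr : (0 : ℝ) ≤ (n : ℝ) := Nat.cast_nonneg _
    have hc1 : 0 ≤ ((q : ℝ) - 1) / ((q : ℝ) + 1) := by
      apply div_nonneg <;> linarith
    have hc2 : ((q : ℝ) - 1) / ((q : ℝ) + 1) ≤ 1 := by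
      rw [div_le_one (by linarith)]; linarith
    have hnn0 : 0 ≤ ((q : ℝ) - 1) / ((q : ℝ) + 1) * (n : ℝ) + 1 := by nlinarith
    rw [hcast, Complex.norm_real, Real.norm_eq_abs, _root_.abs_of_nonneg hnn0]
    nlinarith
  have hpow : ‖(q : ℂ) ^ (-(n : ℂ) / 2)‖ = (q : ℝ) ^ (-(n : ℝ) / 2) := by
    rw [abs_q_cpow hq]
    congr 1
    have : (-(n : ℂ) / 2) = (((-(n : ℝ) / 2 : ℝ)) : ℂ) := by push_cast; ring
    rw [this, Complex.ofReal_re]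
  have hrpow_nonneg : (0 : ℝ) ≤ (q : ℝ) ^ (-(n : ℝ) / 2) := Real.rpow_nonneg (le_of_lt h0) _
  rcases hz with hz1 | hz2
  · have hrw : T.sph z x = ((((q : ℂ) - 1) / ((q : ℂ) + 1)) * (n : ℂ) + 1) *
        (q : ℂ) ^ (-(n : ℂ) / 2) := by
      rw [sph, if_pos hz1]
    rw [hrw, norm_mul, hpow]
    exact mul_le_mul_of_nonneg_right habs hrpow_nonneg
  · by_cases hz1 : ∃ k : ℤ, z = (k : ℂ) * (tau q : ℂ)
    · have hrw : T.sph z x = ((((q : ℂ) - 1) / ((q : ℂ) + 1)) * (n : ℂ) + 1) *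
          (q : ℂ) ^ (-(n : ℂ) / 2) := by
        rw [sph, if_pos hz1]
      rw [hrw, norm_mul, hpow]
      exact mul_le_mul_of_nonneg_right habs hrpow_nonneg
    · have hrw : T.sph z x = (-1 : ℂ) ^ n * ((((q : ℂ) - 1) / ((q : ℂ) + 1)) * (n : ℂ) + 1) *
          (q : ℂ) ^ (-(n : ℂ) / 2) := by
        rw [sph, if_neg hz1, if_pos hz2]
      rw [hrw, norm_mul, norm_mul, hpow]
      have hone : ‖(-1 : ℂ) ^ n‖ = 1 := by
        rw [norm_pow, norm_neg, norm_one, one_pow]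
      rw [hone, one_mul]
      exact mul_le_mul_of_nonneg_right habs hrpow_nonneg

lemma sph_bound_gen (hq : 2 ≤ q) (z : ℂ)
    (hz1 : ¬∃ k : ℤ, z = (k : ℂ) * (tau q : ℂ))
    (hz2 : ¬∃ k : ℤ, z = (tau q : ℂ) / 2 + (k : ℂ) * (tau q : ℂ)) (x : T.X) :
    ‖T.sph z x‖ ≤ (‖cfun q z‖ + ‖cfun q (-z)‖) *
      (q : ℝ) ^ ((|z.im| - 1 / 2) * (T.nrm x : ℝ)) := by
  have h0 : (0 : ℝ) < (q : ℝ) := by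
    have : 0 < q := by omega
    exact_mod_cast this
  have h1 : (1 : ℝ) ≤ (q : ℝ) := by
    have : 1 ≤ q := by omega
    exact_mod_cast this
  set n := T.nrm x with hn
  have hrw : T.sph z x = cfun q z * (q : ℂ) ^ ((I * z - 1 / 2) * (n : ℂ)) +
      cfun q (-z) * (q : ℂ) ^ ((-(I * z) - 1 / 2) * (n : ℂ)) := by
    rw [sph, if_neg hz1, if_neg hz2]
  have hre1 : ((I * z - 1 / 2) * (n : ℂ)).re = (-z.im - 1 / 2) * (n : ℝ) := by
    simp [Complex.mul_re, Complex.sub_re, Complex.mul_im, Complex.sub_im]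
  have hre2 : ((-(I * z) - 1 / 2) * (n : ℂ)).re = (z.im - 1 / 2) * (n : ℝ) := by
    simp [Complex.mul_re, Complex.sub_re, Complex.mul_im, Complex.sub_im]
  have hb1 : ‖(q : ℂ) ^ ((I * z - 1 / 2) * (n : ℂ))‖ ≤
      (q : ℝ) ^ ((|z.im| - 1 / 2) * (n : ℝ)) := by
    rw [abs_q_cpow hq, hre1]
    apply Real.rpow_le_rpow_of_exponent_le h1
    have : -z.im ≤ |z.im| := neg_le_abs _
    have hnn : (0 : ℝ) ≤ (n : ℝ) := Nat.cast_nonneg _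
    nlinarith
  have hb2 : ‖(q : ℂ) ^ ((-(I * z) - 1 / 2) * (n : ℂ))‖ ≤
      (q : ℝ) ^ ((|z.im| - 1 / 2) * (n : ℝ)) := by
    rw [abs_q_cpow hq, hre2]
    apply Real.rpow_le_rpow_of_exponent_le h1
    have : z.im ≤ |z.im| := le_abs_self _
    have hnn : (0 : ℝ) ≤ (n : ℝ) := Nat.cast_nonneg _
    nlinarith
  rw [hrw]
  calc ‖cfun q z * (q : ℂ) ^ ((I * z - 1 / 2) * (n : ℂ)) +
        cfun q (-z) * (q : ℂ) ^ ((-(I * z) - 1 / 2) * (n : ℂ))‖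
      ≤ ‖cfun q z * (q : ℂ) ^ ((I * z - 1 / 2) * (n : ℂ))‖ +
        ‖cfun q (-z) * (q : ℂ) ^ ((-(I * z) - 1 / 2) * (n : ℂ))‖ :=
      norm_add_le _ _
    _ ≤ ‖cfun q z‖ * (q : ℝ) ^ ((|z.im| - 1 / 2) * (n : ℝ)) +
        ‖cfun q (-z)‖ * (q : ℝ) ^ ((|z.im| - 1 / 2) * (n : ℝ)) := by
      rw [norm_mul, norm_mul]
      exact add_le_add (mul_le_mul_of_nonneg_left hb1 (norm_nonneg _))
        (mul_le_mul_of_nonneg_left hb2 (norm_nonneg _))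
    _ = (‖cfun q z‖ + ‖cfun q (-z)‖) *
        (q : ℝ) ^ ((|z.im| - 1 / 2) * (n : ℝ)) := by ring

lemma master (hq : 2 ≤ q) (f : T.X → ℂ) (hrad : T.Radial f)
    (p : ℝ) (hp : 1 ≤ p) (hf : lorN1 p f < ⊤)
    (h : ℕ → ℝ) (hh : ∀ n, 0 ≤ h n)
    (C : ℝ) (hC0 : 0 ≤ C)
    (hC : ∀ n : ℕ, (2 * (q : ℝ) ^ n) * h n ≤ C * ((q : ℝ) ^ ((1 : ℝ) / p)) ^ n) :
    Summable (fun x : T.X => ‖f x‖ * h (T.nrm x)) := by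
  classical
  have hq0 : (0 : ℝ) < (q : ℝ) := by
    have : 0 < q := by omega
    exact_mod_cast this
  have hp0 : (0 : ℝ) < p := lt_of_lt_of_le one_pos hp
  have hip : (0 : ℝ) < 1 / p := by positivity
  have hne : ∀ n, (T.level n).Nonempty := T.level_nonempty hq
  choose pt hpt using hne
  have hnrm : ∀ n, T.nrm (pt n) = n := fun n => hpt n
  set g : ℕ → ℝ := fun n => ‖f (pt n)‖ with hg
  have hgx : ∀ x, ‖f x‖ = g (T.nrm x) := by
    intro x
    exact congrArg (fun w : ℂ => ‖w‖) (hrad x (pt (T.nrm x)) (hnrm (T.nrm x)).symm)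
  set R : ℝ≥0∞ := (q : ℝ≥0∞) ^ ((1 : ℝ) / p) with hR
  have hqE1 : (1 : ℝ≥0∞) < (q : ℝ≥0∞) := by exact_mod_cast (by omega : 1 < q)
  have hR1 : 1 < R := ENNReal.one_lt_rpow hqE1 hip
  have hRne0 : R ≠ 0 := (lt_trans zero_lt_one hR1).ne'
  have hRtop : R ≠ ⊤ := by
    rw [hR]
    exact ENNReal.rpow_ne_top_of_nonneg (le_of_lt hip) (ENNReal.natCast_ne_top q)
  set D : ℝ≥0∞ := (1 - R⁻¹)⁻¹ with hD
  have hDne0 : D ≠ 0 :=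
    ENNReal.inv_ne_zero.mpr (ne_top_of_le_ne_top ENNReal.one_ne_top tsub_le_self)
  have hDtop : D ≠ ⊤ := by
    have h1 : (1 : ℝ≥0∞) - R⁻¹ ≠ 0 := by
      rw [Ne, tsub_eq_zero_iff_le]
      exact not_le.mpr (ENNReal.inv_lt_one.mpr hR1)
    exact ENNReal.inv_ne_top.mpr h1
  have hcount : ∀ n : ℕ, ((q : ℝ≥0∞)) ^ n ≤ Measure.count (T.level n) := by
    intro n
    rw [Measure.count_apply_finite _ (T.level_finite n)]
    have h1 : q ^ n ≤ (T.level_finite n).toFinset.card := by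
      rw [← Set.ncard_eq_toFinset_card _ (T.level_finite n)]
      exact (T.level_ncard_bounds hq n).1
    exact_mod_cast h1
  -- pointwise claim
  have claim : ∀ s : ℝ,
      (∑' n : ℕ, R ^ n * (Set.Iio (g n)).indicator (fun _ => (1 : ℝ≥0∞)) s)
        ≤ D * (Measure.count {y : T.X | s < ‖f y‖}) ^ ((1 : ℝ) / p) := by
    intro s
    set N := Measure.count {y : T.X | s < ‖f y‖} with hN
    have hsimp : ∀ n : ℕ, R ^ n * (Set.Iio (g n)).indicator (fun _ => (1 : ℝ≥0∞)) s
        = if s < g n then R ^ n else 0 := by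
      intro n
      by_cases hsg : s < g n
      · rw [Set.indicator_of_mem (by exact hsg), mul_one, if_pos hsg]
      · rw [Set.indicator_of_notMem (by exact hsg), mul_zero, if_neg hsg]
    rw [tsum_congr hsimp]
    have hlev : ∀ n : ℕ, s < g n → (q : ℝ≥0∞) ^ n ≤ N := by
      intro n hsg
      refine le_trans (hcount n) (measure_mono ?_)
      intro y hy
      have hyn : T.nrm y = n := hy
      simp only [Set.mem_setOf_eq]
      rw [hgx y, hyn]
      exact hsg
    by_cases hbdd : ∃ m, ∀ n : ℕ, s < g n → n ≤ m
    · by_cases hex : ∃ n : ℕ, s < g n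
      · have hJne : {n : ℕ | s < g n}.Nonempty := hex
        have hJb : BddAbove {n : ℕ | s < g n} := by
          obtain ⟨m, hm⟩ := hbdd
          exact ⟨m, fun n hn => hm n hn⟩
        set m := sSup {n : ℕ | s < g n} with hm
        have hmm : s < g m := Nat.sSup_mem hJne hJb
        have hle : ∀ n : ℕ, s < g n → n ≤ m := fun n hn => le_csSup hJb hn
        have hstep1 : (∑' n : ℕ, if s < g n then R ^ n else 0)
            ≤ ∑ n ∈ Finset.range (m + 1), R ^ n := by
          calc (∑' n : ℕ, if s < g n then R ^ n else 0)
              ≤ ∑' n : ℕ, if n ≤ m then R ^ n else 0 := by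
                apply ENNReal.tsum_le_tsum
                intro n
                by_cases hsg : s < g n
                · rw [if_pos hsg, if_pos (hle n hsg)]
                · simp [hsg]
            _ = ∑ n ∈ Finset.range (m + 1), (if n ≤ m then R ^ n else 0) :=
                tsum_eq_sum (fun n hn => if_neg (by simp only [Finset.mem_range] at hn; omega))
            _ = ∑ n ∈ Finset.range (m + 1), R ^ n :=
                Finset.sum_congr rfl
                  (fun n hn => if_pos (by simp only [Finset.mem_range] at hn; omega))
        have hgeom : (∑ n ∈ Finset.range (m + 1), R ^ n) ≤ R ^ m * D := by
          rw [← Finset.sum_range_reflect]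
          have hterm : ∀ j ∈ Finset.range (m + 1),
              R ^ (m + 1 - 1 - j) ≤ R ^ m * (R⁻¹) ^ j := by
            intro j hj
            rw [Finset.mem_range] at hj
            have heq : R ^ (m + 1 - 1 - j) * R ^ j = R ^ m := by
              rw [← pow_add]; congr 1; omega
            have hRj0 : R ^ j ≠ 0 := pow_ne_zero j hRne0
            have hRjt : R ^ j ≠ ⊤ := ENNReal.pow_ne_top hRtop
            calc R ^ (m + 1 - 1 - j) = R ^ (m + 1 - 1 - j) * (R ^ j * (R ^ j)⁻¹) := by
                  rw [ENNReal.mul_inv_cancel hRj0 hRjt, mul_one]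
              _ = (R ^ (m + 1 - 1 - j) * R ^ j) * ((R ^ j)⁻¹) := by rw [mul_assoc]
              _ = R ^ m * (R⁻¹) ^ j := by rw [heq, ENNReal.inv_pow]
              _ ≤ R ^ m * (R⁻¹) ^ j := le_rfl
          calc (∑ j ∈ Finset.range (m + 1), R ^ (m + 1 - 1 - j))
              ≤ ∑ j ∈ Finset.range (m + 1), R ^ m * (R⁻¹) ^ j := Finset.sum_le_sum hterm
            _ = R ^ m * ∑ j ∈ Finset.range (m + 1), (R⁻¹) ^ j := by rw [Finset.mul_sum]
            _ ≤ R ^ m * ∑' j : ℕ, (R⁻¹) ^ j :=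
                mul_le_mul_right (ENNReal.sum_le_tsum _) _
            _ = R ^ m * D := by rw [ENNReal.tsum_geometric]
        have hRm : R ^ m ≤ N ^ ((1 : ℝ) / p) := by
          have h1 : ((q : ℝ≥0∞) ^ m) ^ ((1 : ℝ) / p) ≤ N ^ ((1 : ℝ) / p) :=
            ENNReal.rpow_le_rpow (hlev m hmm) (le_of_lt hip)
          have h2 : R ^ m = ((q : ℝ≥0∞) ^ m) ^ ((1 : ℝ) / p) := by
            rw [hR, ← ENNReal.rpow_natCast ((q : ℝ≥0∞) ^ ((1 : ℝ) / p)) m,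
              ← ENNReal.rpow_natCast (q : ℝ≥0∞) m, ← ENNReal.rpow_mul,
              ← ENNReal.rpow_mul, mul_comm]
          rw [h2]
          exact h1
        calc (∑' n : ℕ, if s < g n then R ^ n else 0) ≤ R ^ m * D :=
            le_trans hstep1 hgeom
          _ ≤ N ^ ((1 : ℝ) / p) * D := mul_le_mul_left hRm D
          _ = D * N ^ ((1 : ℝ) / p) := mul_comm _ _
      · push_neg at hex
        have hz : ∀ n : ℕ, (if s < g n then R ^ n else 0) = 0 :=
          fun n => if_neg (not_lt.mpr (hex n))
        simp only [hz, tsum_zero]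
        exact zero_le
    · push_neg at hbdd
      have hNtop : N = ⊤ := by
        rw [hN]
        apply Measure.count_apply_infinite
        have hJinf : {n : ℕ | s < g n}.Infinite := by
          apply Set.infinite_of_not_bddAbove
          rintro ⟨m, hm⟩
          obtain ⟨n, hn1, hn2⟩ := hbdd m
          exact absurd (hm (show n ∈ {n : ℕ | s < g n} from hn1)) (by omega)
        have himg : ((fun n => pt n) '' {n : ℕ | s < g n}).Infinite := by
          apply hJinf.image
          intro a _ b _ hab
          have := congrArg T.nrm hab
          rwa [hnrm, hnrm] at this
        apply himg.mono
        rintro _ ⟨n, hn, rfl⟩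
        simp only [Set.mem_setOf_eq]
        rw [hgx, hnrm]
        exact hn
      rw [hNtop, ENNReal.top_rpow_of_pos hip, ENNReal.mul_top hDne0]
      exact le_top
  -- global bound
  have key : (∑' x : T.X, ENNReal.ofReal (‖f x‖ * h (T.nrm x))) ≠ ⊤ := by
    set φ : ℕ → ℝ≥0∞ := fun n => ENNReal.ofReal (g n * h n) with hφ
    have hterm : ∀ x : T.X,
        ENNReal.ofReal (‖f x‖ * h (T.nrm x)) = φ (T.nrm x) := by
      intro x
      rw [hφ]
      simp only
      rw [hgx x]
    rw [tsum_congr hterm]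
    let e : (Σ n : ℕ, {x : T.X // T.nrm x = n}) ≃ T.X :=
      { toFun := fun σ => σ.2.1
        invFun := fun x => ⟨T.nrm x, x, rfl⟩
        left_inv := by rintro ⟨n, x, rfl⟩; rfl
        right_inv := fun x => rfl }
    have hgrp : (∑' x : T.X, φ (T.nrm x))
        = ∑' n : ℕ, ∑' x : {x : T.X // T.nrm x = n}, φ (T.nrm x.1) := by
      rw [← Equiv.tsum_eq e (fun x => φ (T.nrm x))]
      exact ENNReal.tsum_sigma' _
    rw [hgrp]
    have hinner : ∀ n : ℕ, (∑' x : {x : T.X // T.nrm x = n}, φ (T.nrm x.1))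
        = ((T.level n).ncard : ℝ≥0∞) * φ n := by
      intro n
      have hc : ∀ x : {x : T.X // T.nrm x = n}, φ (T.nrm x.1) = φ n := fun x => by rw [x.2]
      rw [tsum_congr hc]
      haveI : Fintype {x : T.X // T.nrm x = n} := (T.level_finite n).fintype
      rw [tsum_fintype, Finset.sum_const, nsmul_eq_mul]
      congr 1
      rw [Finset.card_univ]
      have hcardeq : Fintype.card {x : T.X // T.nrm x = n} = (T.level n).ncard := by
        haveI := (T.level_finite n).fintype
        rw [Set.ncard_eq_toFinset_card' (T.level n), Set.toFinset_card]
        exact Fintype.card_congr (Equiv.subtypeEquivRight fun x => Iff.rfl)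
      exact_mod_cast hcardeq
    rw [tsum_congr hinner]
    have hbound : ∀ n : ℕ, ((T.level n).ncard : ℝ≥0∞) * φ n
        ≤ ENNReal.ofReal C * (R ^ n * ENNReal.ofReal (g n)) := by
      intro n
      rw [hφ]
      simp only
      have hA : ((T.level n).ncard : ℝ) ≤ 2 * (q : ℝ) ^ n := by
        exact_mod_cast (T.level_ncard_bounds hq n).2
      have hgn : 0 ≤ g n := norm_nonneg _
      have h2 : ((T.level n).ncard : ℝ) * h n ≤ C * ((q : ℝ) ^ ((1 : ℝ) / p)) ^ n :=
        le_trans (mul_le_mul_of_nonneg_right hA (hh n)) (hC n)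
      have hreal : ((T.level n).ncard : ℝ) * (g n * h n)
          ≤ (C * ((q : ℝ) ^ ((1 : ℝ) / p)) ^ n) * g n := by
        calc ((T.level n).ncard : ℝ) * (g n * h n)
            = (((T.level n).ncard : ℝ) * h n) * g n := by ring
          _ ≤ (C * ((q : ℝ) ^ ((1 : ℝ) / p)) ^ n) * g n :=
            mul_le_mul_of_nonneg_right h2 hgn
      calc ((T.level n).ncard : ℝ≥0∞) * ENNReal.ofReal (g n * h n)
          = ENNReal.ofReal (((T.level n).ncard : ℝ) * (g n * h n)) := by
            rw [ENNReal.ofReal_mul (Nat.cast_nonneg _), ENNReal.ofReal_natCast]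
        _ ≤ ENNReal.ofReal ((C * ((q : ℝ) ^ ((1 : ℝ) / p)) ^ n) * g n) :=
            ENNReal.ofReal_le_ofReal hreal
        _ = ENNReal.ofReal C * (R ^ n * ENNReal.ofReal (g n)) := by
            rw [ENNReal.ofReal_mul (by positivity), ENNReal.ofReal_mul hC0, mul_assoc]
            congr 2
            rw [ENNReal.ofReal_pow (Real.rpow_nonneg (le_of_lt hq0) _)]
            congr 1
            rw [← ENNReal.ofReal_rpow_of_pos hq0, ENNReal.ofReal_natCast]
    have hcore : (∑' n : ℕ, R ^ n * ENNReal.ofReal (g n)) ≤ D * lorN1 p f := by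
      have hlayer : ∀ n : ℕ, R ^ n * ENNReal.ofReal (g n)
          = ∫⁻ s in Set.Ioi (0 : ℝ),
              R ^ n * (Set.Iio (g n)).indicator (fun _ => (1 : ℝ≥0∞)) s := by
        intro n
        rw [lintegral_const_mul' _ _ (ENNReal.pow_ne_top hRtop)]
        congr 1
        rw [lintegral_indicator measurableSet_Iio]
        rw [MeasureTheory.setLIntegral_one]
        rw [Measure.restrict_apply measurableSet_Iio, Set.Iio_inter_Ioi, Real.volume_Ioo,
          sub_zero]
      rw [tsum_congr hlayer]
      rw [← lintegral_tsum (fun n =>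
        ((measurable_const.indicator measurableSet_Iio).const_mul _).aemeasurable)]
      calc ∫⁻ s in Set.Ioi (0 : ℝ),
            (∑' n : ℕ, R ^ n * (Set.Iio (g n)).indicator (fun _ => (1 : ℝ≥0∞)) s)
          ≤ ∫⁻ s in Set.Ioi (0 : ℝ),
            D * (Measure.count {y : T.X | s < ‖f y‖}) ^ ((1 : ℝ) / p) :=
          lintegral_mono (fun s => claim s)
        _ = D * lorN1 p f := by
          rw [lintegral_const_mul' _ _ hDtop]
          rfl
    have hchain : (∑' n : ℕ, ((T.level n).ncard : ℝ≥0∞) * φ n)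
        ≤ ENNReal.ofReal C * (D * lorN1 p f) := by
      calc (∑' n : ℕ, ((T.level n).ncard : ℝ≥0∞) * φ n)
          ≤ ∑' n : ℕ, ENNReal.ofReal C * (R ^ n * ENNReal.ofReal (g n)) :=
          ENNReal.tsum_le_tsum hbound
        _ = ENNReal.ofReal C * ∑' n : ℕ, R ^ n * ENNReal.ofReal (g n) :=
          ENNReal.tsum_mul_left
        _ ≤ ENNReal.ofReal C * (D * lorN1 p f) := mul_le_mul_right hcore _
    have hfin : ENNReal.ofReal C * (D * lorN1 p f) ≠ ⊤ :=
      ENNReal.mul_ne_top ENNReal.ofReal_ne_top (ENNReal.mul_ne_top hDtop (ne_of_lt hf))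
    exact ne_top_of_le_ne_top hfin hchain
  have heq : (fun x : T.X => ‖f x‖ * h (T.nrm x))
      = fun x => (ENNReal.ofReal (‖f x‖ * h (T.nrm x))).toReal := by
    funext x
    rw [ENNReal.toReal_ofReal (mul_nonneg (norm_nonneg _) (hh _))]
  rw [heq]
  exact ENNReal.summable_toReal key

lemma nondeg_case (hq : 2 ≤ q) (f : T.X → ℂ) (hrad : T.Radial f)
    (p : ℝ) (hp1 : 1 ≤ p) (hf : lorN1 p f < ⊤) (z : ℂ)
    (hz : |z.im| ≤ 1 / p - 1 / 2)
    (hz1 : ¬∃ k : ℤ, z = (k : ℂ) * (tau q : ℂ))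
    (hz2 : ¬∃ k : ℤ, z = (tau q : ℂ) / 2 + (k : ℂ) * (tau q : ℂ)) :
    Summable (fun x : T.X => ‖f x * T.sph z x‖) := by
  have hq0 : (0 : ℝ) < (q : ℝ) := by
    have : 0 < q := by omega
    exact_mod_cast this
  have hq1 : (1 : ℝ) ≤ (q : ℝ) := by
    have : 1 ≤ q := by omega
    exact_mod_cast this
  have hp0 : (0 : ℝ) < p := by linarith
  set K := ‖cfun q z‖ + ‖cfun q (-z)‖ with hK
  have hK0 : 0 ≤ K := by positivity
  have hsum := T.master hq f hrad p hp1 hf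
    (fun n => K * (q : ℝ) ^ ((|z.im| - 1 / 2) * (n : ℝ))) (fun n => by positivity)
    (2 * K) (by linarith)
    (by
      intro n
      have e1 : (q : ℝ) ^ n = (q : ℝ) ^ ((n : ℝ)) := (Real.rpow_natCast _ n).symm
      have e2 : ((q : ℝ) ^ ((1 : ℝ) / p)) ^ n = (q : ℝ) ^ (((1 : ℝ) / p) * (n : ℝ)) := by
        rw [← Real.rpow_natCast ((q : ℝ) ^ ((1 : ℝ) / p)) n, ← Real.rpow_mul (le_of_lt hq0)]
      have key : (q : ℝ) ^ ((n : ℝ)) * (q : ℝ) ^ ((|z.im| - 1 / 2) * (n : ℝ))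
          = (q : ℝ) ^ ((|z.im| + 1 / 2) * (n : ℝ)) := by
        rw [← Real.rpow_add hq0]; congr 1; ring
      have hmono : (q : ℝ) ^ ((|z.im| + 1 / 2) * (n : ℝ))
          ≤ (q : ℝ) ^ (((1 : ℝ) / p) * (n : ℝ)) := by
        apply Real.rpow_le_rpow_of_exponent_le hq1
        have hn0 : (0 : ℝ) ≤ (n : ℝ) := Nat.cast_nonneg n
        nlinarith
      calc 2 * (q : ℝ) ^ n * (K * (q : ℝ) ^ ((|z.im| - 1 / 2) * (n : ℝ)))
          = 2 * K * ((q : ℝ) ^ ((n : ℝ)) * (q : ℝ) ^ ((|z.im| - 1 / 2) * (n : ℝ))) := by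
            rw [e1]; ring
        _ = 2 * K * (q : ℝ) ^ ((|z.im| + 1 / 2) * (n : ℝ)) := by rw [key]
        _ ≤ 2 * K * (q : ℝ) ^ (((1 : ℝ) / p) * (n : ℝ)) :=
            mul_le_mul_of_nonneg_left hmono (by linarith)
        _ = (2 * K) * ((q : ℝ) ^ ((1 : ℝ) / p)) ^ n := by rw [e2])
  apply Summable.of_nonneg_of_le (fun x => norm_nonneg _) ?_ hsum
  intro x
  rw [norm_mul]
  exact mul_le_mul_of_nonneg_left (T.sph_bound_gen hq z hz1 hz2 x) (norm_nonneg _)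

lemma deg_case (hq : 2 ≤ q) (f : T.X → ℂ) (hrad : T.Radial f)
    (p : ℝ) (hp1 : 1 ≤ p) (hp2 : p < 2) (hf : lorN1 p f < ⊤) (z : ℂ)
    (hdeg : (∃ k : ℤ, z = (k : ℂ) * (tau q : ℂ)) ∨
      (∃ k : ℤ, z = (tau q : ℂ) / 2 + (k : ℂ) * (tau q : ℂ))) :
    Summable (fun x : T.X => ‖f x * T.sph z x‖) := by
  have hq0 : (0 : ℝ) < (q : ℝ) := by
    have : 0 < q := by omega
    exact_mod_cast this
  have h1q : (1 : ℝ) < (q : ℝ) := by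
    have : 1 < q := by omega
    exact_mod_cast this
  have hp0 : (0 : ℝ) < p := by linarith
  have hexp : 0 < (1 : ℝ) / p - 1 / 2 := by
    have h2 : 1 / 2 < 1 / p := by rw [div_lt_div_iff₀ (by norm_num) hp0]; linarith
    linarith
  set ρ := (q : ℝ) ^ ((1 : ℝ) / p - 1 / 2) with hρ
  have hρ1 : 1 < ρ := by
    rw [hρ]
    exact (Real.one_lt_rpow_iff (le_of_lt hq0)).mpr (Or.inl ⟨h1q, hexp⟩)
  obtain ⟨C, hC0, hCb⟩ := absorb hρ1
  have hsum := T.master hq f hrad p hp1 hf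
    (fun n => ((n : ℝ) + 1) * (q : ℝ) ^ (-(n : ℝ) / 2))
    (fun n => by positivity)
    (2 * C) (by linarith)
    (by
      intro n
      have e1 : (q : ℝ) ^ n = (q : ℝ) ^ ((n : ℝ)) := (Real.rpow_natCast _ n).symm
      have e2 : ((q : ℝ) ^ ((1 : ℝ) / p)) ^ n = (q : ℝ) ^ (((1 : ℝ) / p) * (n : ℝ)) := by
        rw [← Real.rpow_natCast ((q : ℝ) ^ ((1 : ℝ) / p)) n, ← Real.rpow_mul (le_of_lt hq0)]
      have e3 : ρ ^ n = (q : ℝ) ^ ((((1 : ℝ) / p) - 1 / 2) * (n : ℝ)) := by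
        rw [hρ, ← Real.rpow_natCast ((q : ℝ) ^ ((1 : ℝ) / p - 1 / 2)) n,
          ← Real.rpow_mul (le_of_lt hq0)]
      have key : (q : ℝ) ^ ((n : ℝ)) * (q : ℝ) ^ (-(n : ℝ) / 2) = (q : ℝ) ^ ((n : ℝ) / 2) := by
        rw [← Real.rpow_add hq0]; congr 1; ring
      have key2 : (q : ℝ) ^ (((1 : ℝ) / p) * (n : ℝ))
          = (q : ℝ) ^ ((n : ℝ) / 2) * (q : ℝ) ^ ((((1 : ℝ) / p) - 1 / 2) * (n : ℝ)) := by
        rw [← Real.rpow_add hq0]; congr 1; ring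
      have hq2 : (0 : ℝ) < (q : ℝ) ^ ((n : ℝ) / 2) := Real.rpow_pos_of_pos hq0 _
      calc 2 * (q : ℝ) ^ n * (((n : ℝ) + 1) * (q : ℝ) ^ (-(n : ℝ) / 2))
          = 2 * ((n : ℝ) + 1) * ((q : ℝ) ^ ((n : ℝ)) * (q : ℝ) ^ (-(n : ℝ) / 2)) := by
            rw [e1]; ring
        _ = 2 * ((n : ℝ) + 1) * (q : ℝ) ^ ((n : ℝ) / 2) := by rw [key]
        _ ≤ 2 * (C * ρ ^ n) * (q : ℝ) ^ ((n : ℝ) / 2) := by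
            apply mul_le_mul_of_nonneg_right _ (le_of_lt hq2)
            have := hCb n
            linarith
        _ = (2 * C) * ((q : ℝ) ^ ((1 : ℝ) / p)) ^ n := by
            rw [e2, key2, e3]; ring)
  apply Summable.of_nonneg_of_le (fun x => norm_nonneg _) ?_ hsum
  intro x
  rw [norm_mul]
  exact mul_le_mul_of_nonneg_left (T.sph_bound_deg hq z hdeg x) (norm_nonneg _)

/-- For a radial `f`: (a) if `1 ≤ p < 2`, `f ∈ L^{p,1}(𝔛)` and `|Im z| ≤ δ_p`, then
`f̂(z)` converges absolutely; (b) if `f ∈ L^{2,1}(𝔛)` and `z ∈ ℝ \ (τ/2)ℤ`, then `f̂(z)`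
converges absolutely. -/
theorem statement6 {q : ℕ} (hq : 2 ≤ q) (T : HomTree q) (f : T.X → ℂ) (hrad : T.Radial f) :
    (∀ p : ℝ, 1 ≤ p → p < 2 → lorN1 p f < ⊤ → ∀ z : ℂ, |z.im| ≤ 1 / p - 1 / 2 →
      Summable (fun x : T.X => ‖f x * T.sph z x‖)) ∧
    (lorN1 2 f < ⊤ → ∀ z : ℂ, z.im = 0 → (¬∃ k : ℤ, z = (k : ℂ) * ((tau q / 2 : ℝ) : ℂ)) →
      Summable (fun x : T.X => ‖f x * T.sph z x‖)) := by
  constructor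
  · intro p hp1 hp2 hf z hz
    by_cases hdeg : (∃ k : ℤ, z = (k : ℂ) * (tau q : ℂ)) ∨
      (∃ k : ℤ, z = (tau q : ℂ) / 2 + (k : ℂ) * (tau q : ℂ))
    · exact T.deg_case hq f hrad p hp1 hp2 hf z hdeg
    · rw [not_or] at hdeg
      exact T.nondeg_case hq f hrad p hp1 hf z hz hdeg.1 hdeg.2
  · intro hf z hzim hzk
    have hz1 : ¬∃ k : ℤ, z = (k : ℂ) * (tau q : ℂ) := by
      rintro ⟨k, rfl⟩
      exact hzk ⟨2 * k, by push_cast; ring⟩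
    have hz2 : ¬∃ k : ℤ, z = (tau q : ℂ) / 2 + (k : ℂ) * (tau q : ℂ) := by
      rintro ⟨k, rfl⟩
      exact hzk ⟨2 * k + 1, by push_cast; ring⟩
    exact T.nondeg_case hq f hrad 2 (by norm_num) hf z (by rw [hzim]; norm_num) hz1 hz2
end HomTree
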